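/- For 0 < ε ≤ 1/4, the piecewise regularization h_ε defined by h_ε(z) = 0 for z < 0; h_ε(z) = −z³/ε² + (2/ε − 1)z² for 0 ≤ z < ε; h_ε(z) = z(1−z) for ε ≤ z ≤ 1−ε; h_ε(z) = z³/ε² + (−3/ε² + 2/ε − 1)z² + (3/ε² − 4/ε + 2)z − 1/ε² + 2/ε − 1 for 1−ε < z ≤ 1; h_ε(z) = 0 for z > 1, satisfies |h(z) − h_ε(z)| ≤ ε − ε² for all z ∈ ℝ, where h(z) = z⁺(1−z)⁺. -/

import Mathlib

/-! On `[ε, 1 - ε]` and outside `[0, 1]` the two functions agree. On `[0, ε)` the difference is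
`z (ε - z)² / ε²`, and on `(1 - ε, 1]` it is the same expression at `1 - z`; by AM-GM,
`w (ε - w)² ≤ 4ε³/27` on `[0, ε]`, so the difference is at most `4ε/27 ≤ ε - ε²`. -/

noncomputable def heps (ε : ℝ) (z : ℝ) : ℝ :=
  if z < 0 then 0
  else if z < ε then -z ^ 3 / ε ^ 2 + (2 / ε - 1) * z ^ 2
  else if z ≤ 1 - ε then z * (1 - z)
  else if z ≤ 1 then
    z ^ 3 / ε ^ 2 + (-3 / ε ^ 2 + 2 / ε - 1) * z ^ 2 + (3 / ε ^ 2 - 4 / ε + 2) * z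
      - 1 / ε ^ 2 + 2 / ε - 1
  else 0

lemma mul_sub_sq_le {ε w : ℝ} (hw : 3 * w ≤ 4 * ε) : 27 * (w * (ε - w) ^ 2) ≤ 4 * ε ^ 3 := by
  nlinarith [mul_nonneg (sq_nonneg (3 * w - ε)) (sub_nonneg.2 hw)]

lemma abs_mul_sub_sq_div_sq_le {ε w : ℝ} (hε0 : 0 < ε) (hε : ε ≤ 1 / 4) (hw0 : 0 ≤ w)
    (hw : w ≤ ε) : |w * (ε - w) ^ 2 / ε ^ 2| ≤ ε - ε ^ 2 := by
  rw [abs_of_nonneg (by positivity), div_le_iff₀ (by positivity)]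
  nlinarith [mul_sub_sq_le (ε := ε) (w := w) (by linarith), pow_pos hε0 3]

lemma mul_one_sub_sub_left_cubic {ε : ℝ} (hε : ε ≠ 0) (z : ℝ) :
    z * (1 - z) - (-z ^ 3 / ε ^ 2 + (2 / ε - 1) * z ^ 2) = z * (ε - z) ^ 2 / ε ^ 2 := by
  field_simp
  ring

lemma mul_one_sub_sub_right_cubic {ε : ℝ} (hε : ε ≠ 0) (z : ℝ) :
    z * (1 - z) - (z ^ 3 / ε ^ 2 + (-3 / ε ^ 2 + 2 / ε - 1) * z ^ 2
      + (3 / ε ^ 2 - 4 / ε + 2) * z - 1 / ε ^ 2 + 2 / ε - 1)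
      = (1 - z) * (ε - (1 - z)) ^ 2 / ε ^ 2 := by
  field_simp
  ring

theorem heps_close (ε : ℝ) (hε0 : 0 < ε) (hε : ε ≤ 1 / 4) :
    ∀ z : ℝ, |max 0 z * max 0 (1 - z) - heps ε z| ≤ ε - ε ^ 2 := by
  intro z
  have hbound : 0 ≤ ε - ε ^ 2 := by nlinarith
  unfold heps
  split_ifs with hneg hleft hmid hright
  · simpa [max_eq_left hneg.le] using hbound
  · have hz0 : 0 ≤ z := not_lt.mp hneg
    rw [max_eq_right hz0, max_eq_right (by linarith), mul_one_sub_sub_left_cubic hε0.ne']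
    exact abs_mul_sub_sq_div_sq_le hε0 hε hz0 hleft.le
  · rw [max_eq_right (by linarith), max_eq_right (by linarith)]
    simpa using hbound
  · rw [max_eq_right (by linarith), max_eq_right (by linarith),
      mul_one_sub_sub_right_cubic hε0.ne']
    exact abs_mul_sub_sq_div_sq_le hε0 hε (by linarith) (by linarith)
  · simpa [max_eq_left (by linarith : 1 - z ≤ 0)] using hbound
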